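/- Define G_{N,t}(x) := (t / log N) · ∫_0^t exp(-((t-s)t/s) · x²/N²) ds/s. Then for every fixed t > 0 and x ∈ ℝ \ {0}, G_{N,t}(x) → 2t as N → ∞. -/

import Mathlib

open Real MeasureTheory Set Filter Topology

noncomputable def G (N t x : ℝ) : ℝ :=
  (t / Real.log N) * ∫ s in (0:ℝ)..t, Real.exp (-(((t - s) * t / s) * (x ^ 2 / N ^ 2))) / s

lemma exp_neg_le_inv' {y : ℝ} (hy : 0 < y) : Real.exp (-y) ≤ y⁻¹ := by
  rw [Real.exp_neg]
  apply inv_anti₀ hy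
  linarith [Real.add_one_le_exp y]

lemma g_le {t c s : ℝ} (ht : 0 < t) (hc : 0 < c) (hs : 0 < s) (hst : s ≤ t / 2) :
    Real.exp (-(((t - s) * t / s) * c)) / s ≤ 2 / (t ^ 2 * c) := by
  have hts : t / 2 ≤ t - s := by linarith
  have hts0 : 0 < t - s := lt_of_lt_of_le (by linarith) hts
  have hy : 0 < ((t - s) * t / s) * c := by positivity
  have h1 : Real.exp (-(((t - s) * t / s) * c)) / s ≤ (((t - s) * t / s) * c)⁻¹ / s := by
    gcongr
    exact exp_neg_le_inv' hy
  have h2 : (((t - s) * t / s) * c)⁻¹ / s = ((t - s) * (t * c))⁻¹ := by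
    field_simp
  have h3 : ((t - s) * (t * c))⁻¹ ≤ ((t / 2) * (t * c))⁻¹ := by
    apply inv_anti₀ (by positivity)
    gcongr
  have h4 : ((t / 2) * (t * c))⁻¹ = 2 / (t ^ 2 * c) := by
    field_simp
  calc Real.exp (-(((t - s) * t / s) * c)) / s ≤ (((t - s) * t / s) * c)⁻¹ / s := h1
    _ = ((t - s) * (t * c))⁻¹ := h2
    _ ≤ ((t / 2) * (t * c))⁻¹ := h3
    _ = 2 / (t ^ 2 * c) := h4

lemma g_intble {t c : ℝ} (ht : 0 < t) (hc : 0 < c) :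
    IntervalIntegrable (fun s => Real.exp (-(((t - s) * t / s) * c)) / s) volume 0 t := by
  rw [intervalIntegrable_iff_integrableOn_Ioc_of_le ht.le]
  have hcont : ContinuousOn (fun s => Real.exp (-(((t - s) * t / s) * c)) / s) (Ioc 0 t) := by
    apply ContinuousOn.div
    · apply Real.continuous_exp.comp_continuousOn
      apply ContinuousOn.neg
      apply ContinuousOn.mul _ continuousOn_const
      exact ContinuousOn.div (by fun_prop) (by fun_prop) (fun s hs => ne_of_gt hs.1)
    · fun_prop
    · exact fun s hs => ne_of_gt hs.1
  refine Integrable.mono' (integrable_const (max (2 / (t ^ 2 * c)) (2 / t)))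
    (hcont.aestronglyMeasurable measurableSet_Ioc) ?_
  filter_upwards [ae_restrict_mem measurableSet_Ioc] with s hs
  have hs0 : 0 ≤ s := hs.1.le
  rw [Real.norm_eq_abs, abs_of_nonneg (div_nonneg (Real.exp_nonneg _) hs0)]
  rcases le_or_gt s (t / 2) with h | h
  · exact le_max_of_le_left (g_le ht hc hs.1 h)
  · refine le_max_of_le_right ?_
    have hy : 0 ≤ ((t - s) * t / s) * c :=
      mul_nonneg (div_nonneg (mul_nonneg (by linarith [hs.2]) ht.le) hs.1.le) hc.le
    have hexp : Real.exp (-(((t - s) * t / s) * c)) ≤ 1 := by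
      apply Real.exp_le_one_iff.mpr; linarith
    calc Real.exp (-(((t - s) * t / s) * c)) / s ≤ 1 / s := by gcongr
      _ ≤ 2 / t := by rw [div_le_div_iff₀ hs.1 ht]; linarith

theorem stmt_8 (t x : ℝ) (ht : 0 < t) (hx : x ≠ 0) :
    Tendsto (fun N : ℝ => G N t x) atTop (nhds (2 * t)) := by
  have hx2 : (0:ℝ) < x ^ 2 := by positivity
  have hℓ : Tendsto (fun N : ℝ => Real.log N) atTop atTop := Real.tendsto_log_atTop
  have hsq : Tendsto Real.sqrt atTop atTop := by
    have h := tendsto_rpow_atTop (by norm_num : (0:ℝ) < 1/2)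
    exact h.congr (fun y => (Real.sqrt_eq_rpow y).symm)
  -- sqrt(log N)/N^2 → 0
  have hS : Tendsto (fun N : ℝ => Real.sqrt (Real.log N) / N ^ 2) atTop (𝓝 0) := by
    apply squeeze_zero' (g := fun N : ℝ => 1 / N)
    · filter_upwards [eventually_ge_atTop (1:ℝ)] with N hN
      positivity
    · filter_upwards [eventually_ge_atTop (1:ℝ)] with N hN
      have hN0 : (0:ℝ) < N := by linarith
      have h1 : Real.log N ≤ N := by
        linarith [Real.log_le_sub_one_of_pos hN0]
      have h2 : Real.sqrt (Real.log N) ≤ N := by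
        calc Real.sqrt (Real.log N) ≤ Real.sqrt (N ^ 2) := Real.sqrt_le_sqrt (by nlinarith)
          _ = N := Real.sqrt_sq hN0.le
      rw [div_le_div_iff₀ (by positivity) hN0]
      calc Real.sqrt (Real.log N) * N ≤ N * N := by gcongr
        _ = 1 * N ^ 2 := by ring
    · simpa using tendsto_inv_atTop_zero (𝕜 := ℝ)
  -- eventual smallness of epsilon and delta
  have hεev : ∀ᶠ N : ℝ in atTop, t ^ 2 * x ^ 2 * Real.sqrt (Real.log N) / N ^ 2 ≤ t / 2 := by
    have h := hS.const_mul (t ^ 2 * x ^ 2)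
    rw [mul_zero] at h
    filter_upwards [h.eventually_le_const (show (0:ℝ) < t / 2 by positivity)] with N hN
    rwa [mul_div_assoc]
  have hδev : ∀ᶠ N : ℝ in atTop, t * x ^ 2 * Real.sqrt (Real.log N) / N ^ 2 ≤ t / 2 := by
    have h := hS.const_mul (t * x ^ 2)
    rw [mul_zero] at h
    filter_upwards [h.eventually_le_const (show (0:ℝ) < t / 2 by positivity)] with N hN
    rwa [mul_div_assoc]
  -- tendsto pieces
  have hE : Tendsto (fun ℓ : ℝ => Real.exp (-(1 / Real.sqrt ℓ))) atTop (𝓝 1) := by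
    have h0 : Tendsto (fun ℓ : ℝ => 1 / Real.sqrt ℓ) atTop (𝓝 0) := by
      simp only [one_div]; exact tendsto_inv_atTop_zero.comp hsq
    have h0n := h0.neg
    rw [neg_zero] at h0n
    have h1 := (Real.continuous_exp.tendsto 0).comp h0n
    simpa [Function.comp_def] using h1
  have h3' : Tendsto (fun ℓ : ℝ => Real.log ℓ / (2 * ℓ)) atTop (𝓝 0) := by
    have h := Real.tendsto_pow_log_div_mul_add_atTop 2 0 1 two_ne_zero
    simpa using h
  have hlow : Tendsto (fun N : ℝ => (t / Real.log N) * (Real.exp (-(1 / Real.sqrt (Real.log N))) *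
      (Real.log t - Real.log (t ^ 2 * x ^ 2 * Real.sqrt (Real.log N) / N ^ 2))))
      atTop (𝓝 (2 * t)) := by
    have h2' : Tendsto (fun ℓ : ℝ => (Real.log t + Real.log (x ^ 2)) / ℓ) atTop (𝓝 0) :=
      tendsto_const_nhds.div_atTop tendsto_id
    have hF : Tendsto (fun ℓ : ℝ => t * Real.exp (-(1 / Real.sqrt ℓ)) *
        (2 - (Real.log t + Real.log (x ^ 2)) / ℓ - Real.log ℓ / (2 * ℓ))) atTop (𝓝 (2 * t)) := by
      have h := ((tendsto_const_nhds (x := t)).mul hE).mul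
        (((tendsto_const_nhds (x := (2:ℝ))).sub h2').sub h3')
      have he : t * 1 * (2 - 0 - 0) = 2 * t := by ring
      rwa [he] at h
    refine (hF.comp hℓ).congr' ?_
    filter_upwards [hℓ.eventually_gt_atTop 0, eventually_gt_atTop (0:ℝ)] with N hℓ0 hN0
    simp only [Function.comp_apply]
    have hsℓ : 0 < Real.sqrt (Real.log N) := Real.sqrt_pos.2 hℓ0
    have hlogε : Real.log (t ^ 2 * x ^ 2 * Real.sqrt (Real.log N) / N ^ 2)
        = 2 * Real.log t + Real.log (x ^ 2) + Real.log (Real.log N) / 2 - 2 * Real.log N := by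
      rw [Real.log_div (by positivity) (by positivity),
        Real.log_mul (by positivity) hsℓ.ne',
        Real.log_mul (by positivity) (by positivity),
        Real.log_sqrt hℓ0.le]
      simp only [Real.log_pow]
      push_cast; ring
    rw [hlogε]
    field_simp
    ring
  have hup : Tendsto (fun N : ℝ => (t / Real.log N) * (2 * Real.sqrt (Real.log N) / t +
      (Real.log t - Real.log (t * x ^ 2 * Real.sqrt (Real.log N) / N ^ 2))))
      atTop (𝓝 (2 * t)) := by
    have hA : Tendsto (fun ℓ : ℝ => 2 / Real.sqrt ℓ) atTop (𝓝 0) := by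
      have h := (tendsto_inv_atTop_zero.comp hsq).const_mul (2:ℝ)
      rw [mul_zero] at h
      refine h.congr fun y => ?_
      rw [div_eq_mul_inv]; rfl
    have hB : Tendsto (fun ℓ : ℝ => t * (Real.log (x ^ 2) / ℓ)) atTop (𝓝 0) := by
      have h := (tendsto_const_nhds (x := Real.log (x ^ 2)).div_atTop tendsto_id).const_mul t
      rw [mul_zero] at h
      exact h
    have hC : Tendsto (fun ℓ : ℝ => t * (Real.log ℓ / (2 * ℓ))) atTop (𝓝 0) := by
      have h := h3'.const_mul t
      rwa [mul_zero] at h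
    have hF : Tendsto (fun ℓ : ℝ => 2 * t + 2 / Real.sqrt ℓ - t * (Real.log (x ^ 2) / ℓ)
        - t * (Real.log ℓ / (2 * ℓ))) atTop (𝓝 (2 * t)) := by
      have h := (((tendsto_const_nhds (x := 2 * t)).add hA).sub hB).sub hC
      have he : 2 * t + 0 - 0 - 0 = 2 * t := by ring
      rwa [he] at h
    refine (hF.comp hℓ).congr' ?_
    filter_upwards [hℓ.eventually_gt_atTop 0, eventually_gt_atTop (0:ℝ)] with N hℓ0 hN0
    simp only [Function.comp_apply]
    have hsℓ : 0 < Real.sqrt (Real.log N) := Real.sqrt_pos.2 hℓ0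
    have hlogδ : Real.log (t * x ^ 2 * Real.sqrt (Real.log N) / N ^ 2)
        = Real.log t + Real.log (x ^ 2) + Real.log (Real.log N) / 2 - 2 * Real.log N := by
      rw [Real.log_div (by positivity) (by positivity),
        Real.log_mul (by positivity) hsℓ.ne',
        Real.log_mul ht.ne' (by positivity),
        Real.log_sqrt hℓ0.le]
      simp only [Real.log_pow]
      push_cast; ring
    rw [hlogδ]
    set m := Real.log (Real.log N) with hm
    set sl := Real.sqrt (Real.log N) with hsl
    rw [show Real.log N = sl * sl from (Real.mul_self_sqrt hℓ0.le).symm]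
    field_simp
    ring
  apply tendsto_of_tendsto_of_tendsto_of_le_of_le' hlow hup
  · -- lower bound
    filter_upwards [hℓ.eventually_ge_atTop 1, eventually_ge_atTop (1:ℝ), hεev] with N hℓ1 hN1 hε2
    have hℓ0 : (0:ℝ) < Real.log N := by linarith
    have hN0 : (0:ℝ) < N := by linarith
    have hsℓ : 0 < Real.sqrt (Real.log N) := Real.sqrt_pos.2 hℓ0
    simp only [G]
    set c := x ^ 2 / N ^ 2 with hcdef
    have hc : 0 < c := by rw [hcdef]; positivity
    set ε := t ^ 2 * x ^ 2 * Real.sqrt (Real.log N) / N ^ 2 with hεdef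
    have hε0 : 0 < ε := by rw [hεdef]; positivity
    have hεt : ε ≤ t := le_trans hε2 (by linarith)
    set f : ℝ → ℝ := fun s => Real.exp (-(((t - s) * t / s) * c)) / s with hfdef
    have hI : IntervalIntegrable f volume 0 t := g_intble ht hc
    have hsub1 : Set.uIcc (0:ℝ) ε ⊆ Set.uIcc (0:ℝ) t := by
      rw [uIcc_of_le hε0.le, uIcc_of_le ht.le]; exact Icc_subset_Icc le_rfl hεt
    have hsub2 : Set.uIcc ε t ⊆ Set.uIcc (0:ℝ) t := by
      rw [uIcc_of_le hεt, uIcc_of_le ht.le]; exact Icc_subset_Icc hε0.le le_rfl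
    have hI1 := hI.mono_set hsub1
    have hI2 := hI.mono_set hsub2
    have hsplit : (∫ s in (0:ℝ)..t, f s) = (∫ s in (0:ℝ)..ε, f s) + ∫ s in ε..t, f s :=
      (intervalIntegral.integral_add_adjacent_intervals hI1 hI2).symm
    have h01 : 0 ≤ ∫ s in (0:ℝ)..ε, f s :=
      intervalIntegral.integral_nonneg hε0.le
        (fun s hs => div_nonneg (Real.exp_nonneg _) hs.1)
    have hkey : ∀ s ∈ Icc ε t, Real.exp (-(1 / Real.sqrt (Real.log N))) / s ≤ f s := by
      intro s hs
      have hs0 : 0 < s := lt_of_lt_of_le hε0 hs.1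
      have hy : ((t - s) * t / s) * c ≤ 1 / Real.sqrt (Real.log N) := by
        have h1 : (t - s) * t / s ≤ t * t / ε :=
          div_le_div₀ (by positivity)
            (mul_le_mul_of_nonneg_right (by linarith [hs0.le]) ht.le) hε0 hs.1
        have h2 : (t * t / ε) * c = 1 / Real.sqrt (Real.log N) := by
          rw [hεdef, hcdef]
          field_simp
        calc ((t - s) * t / s) * c ≤ (t * t / ε) * c :=
              mul_le_mul_of_nonneg_right h1 hc.le
          _ = 1 / Real.sqrt (Real.log N) := h2
      have hexp : Real.exp (-(1 / Real.sqrt (Real.log N))) ≤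
          Real.exp (-(((t - s) * t / s) * c)) := Real.exp_le_exp.mpr (by linarith)
      exact (div_le_div_iff_of_pos_right hs0).mpr hexp
    have hconst : IntervalIntegrable
        (fun s => Real.exp (-(1 / Real.sqrt (Real.log N))) / s) volume ε t := by
      apply ContinuousOn.intervalIntegrable
      apply ContinuousOn.div continuousOn_const continuousOn_id
      intro s hs
      rw [uIcc_of_le hεt] at hs
      exact ne_of_gt (lt_of_lt_of_le hε0 hs.1)
    have hmono : (∫ s in ε..t, Real.exp (-(1 / Real.sqrt (Real.log N))) / s) ≤
        ∫ s in ε..t, f s :=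
      intervalIntegral.integral_mono_on hεt hconst hI2 hkey
    have hval : (∫ s in ε..t, Real.exp (-(1 / Real.sqrt (Real.log N))) / s)
        = Real.exp (-(1 / Real.sqrt (Real.log N))) * (Real.log t - Real.log ε) := by
      open intervalIntegral in
      simp only [div_eq_mul_inv]
      rw [intervalIntegral.integral_const_mul, integral_inv_of_pos hε0 ht,
        Real.log_div ht.ne' hε0.ne']
    have htl : 0 ≤ t / Real.log N := div_nonneg ht.le hℓ0.le
    calc t / Real.log N * (Real.exp (-(1 / Real.sqrt (Real.log N))) *
          (Real.log t - Real.log ε))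
        = t / Real.log N * ∫ s in ε..t, Real.exp (-(1 / Real.sqrt (Real.log N))) / s := by
          rw [hval]
      _ ≤ t / Real.log N * ∫ s in (0:ℝ)..t, f s := by
          apply mul_le_mul_of_nonneg_left _ htl
          rw [hsplit]
          linarith
  · -- upper bound
    filter_upwards [hℓ.eventually_ge_atTop 1, eventually_ge_atTop (1:ℝ), hδev] with N hℓ1 hN1 hδ2
    have hℓ0 : (0:ℝ) < Real.log N := by linarith
    have hN0 : (0:ℝ) < N := by linarith
    have hsℓ : 0 < Real.sqrt (Real.log N) := Real.sqrt_pos.2 hℓ0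
    simp only [G]
    set c := x ^ 2 / N ^ 2 with hcdef
    have hc : 0 < c := by rw [hcdef]; positivity
    set δ := t * x ^ 2 * Real.sqrt (Real.log N) / N ^ 2 with hδdef
    have hδ0 : 0 < δ := by rw [hδdef]; positivity
    have hδt : δ ≤ t := le_trans hδ2 (by linarith)
    set f : ℝ → ℝ := fun s => Real.exp (-(((t - s) * t / s) * c)) / s with hfdef
    have hI : IntervalIntegrable f volume 0 t := g_intble ht hc
    have hsub1 : Set.uIcc (0:ℝ) δ ⊆ Set.uIcc (0:ℝ) t := by
      rw [uIcc_of_le hδ0.le, uIcc_of_le ht.le]; exact Icc_subset_Icc le_rfl hδt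
    have hsub2 : Set.uIcc δ t ⊆ Set.uIcc (0:ℝ) t := by
      rw [uIcc_of_le hδt, uIcc_of_le ht.le]; exact Icc_subset_Icc hδ0.le le_rfl
    have hI1 := hI.mono_set hsub1
    have hI2 := hI.mono_set hsub2
    have hsplit : (∫ s in (0:ℝ)..t, f s) = (∫ s in (0:ℝ)..δ, f s) + ∫ s in δ..t, f s :=
      (intervalIntegral.integral_add_adjacent_intervals hI1 hI2).symm
    have hup1 : (∫ s in (0:ℝ)..δ, f s) ≤ 2 * Real.sqrt (Real.log N) / t := by
      have hkey : ∀ s ∈ Icc (0:ℝ) δ, f s ≤ 2 / (t ^ 2 * c) := by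
        intro s hs
        rcases hs.1.eq_or_lt with h0 | hs0
        · rw [hfdef]
          simp only [← h0, div_zero]
          positivity
        · exact g_le ht hc hs0 (le_trans hs.2 hδ2)
      have h1 : (∫ s in (0:ℝ)..δ, f s) ≤ ∫ s in (0:ℝ)..δ, 2 / (t ^ 2 * c) :=
        intervalIntegral.integral_mono_on hδ0.le hI1 intervalIntegrable_const hkey
      have h2 : (∫ s in (0:ℝ)..δ, (2 / (t ^ 2 * c) : ℝ)) = 2 * Real.sqrt (Real.log N) / t := by
        rw [intervalIntegral.integral_const, smul_eq_mul, hδdef, hcdef]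
        field_simp
        ring
      linarith
    have hup2 : (∫ s in δ..t, f s) ≤ Real.log t - Real.log δ := by
      have hkey : ∀ s ∈ Icc δ t, f s ≤ 1 / s := by
        intro s hs
        have hs0 : 0 < s := lt_of_lt_of_le hδ0 hs.1
        have hy : 0 ≤ ((t - s) * t / s) * c :=
          mul_nonneg (div_nonneg (mul_nonneg (by linarith [hs.2]) ht.le) hs0.le) hc.le
        have hexp : Real.exp (-(((t - s) * t / s) * c)) ≤ 1 :=
          Real.exp_le_one_iff.mpr (by linarith)
        exact (div_le_div_iff_of_pos_right hs0).mpr hexp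
      have hconst : IntervalIntegrable (fun s => 1 / s) volume δ t := by
        apply ContinuousOn.intervalIntegrable
        apply ContinuousOn.div continuousOn_const continuousOn_id
        intro s hs
        rw [uIcc_of_le hδt] at hs
        exact ne_of_gt (lt_of_lt_of_le hδ0 hs.1)
      have h1 : (∫ s in δ..t, f s) ≤ ∫ s in δ..t, 1 / s :=
        intervalIntegral.integral_mono_on hδt hI2 hconst hkey
      have h2 : (∫ s in δ..t, (1:ℝ) / s) = Real.log t - Real.log δ := by
        open intervalIntegral in
        rw [integral_one_div_of_pos hδ0 ht, Real.log_div ht.ne' hδ0.ne']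
      linarith
    have htl : 0 ≤ t / Real.log N := div_nonneg ht.le hℓ0.le
    apply mul_le_mul_of_nonneg_left _ htl
    rw [hsplit]
    linarith
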